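/- Let k be a positive integer, n = 2ᵏ, and let W be an m×n real matrix with WᵀW = a·I + b·(J − I) for real constants a, b satisfying a − b > 0 and a + (n−1)b > 0 (J is the all-ones matrix). Then there exists an invertible n×n real matrix A all of whose columns have the same Euclidean norm such that ‖A‖₂² · trace(WᵀW (AᵀA)⁻¹) = (1/n)·(√(a+(n−1)b) + (n−1)·√(a−b))²; that is, the strategy A attains the singular value bound SVDB(W) for the variable agnostic workload W. -/

import Mathlib

open Matrix BigOperators

/-- The maximum Euclidean (L2) column norm of a matrix (its L2 sensitivity). -/
noncomputable def l2Sens {n : ℕ} (A : Matrix (Fin n) (Fin n) ℝ) : ℝ :=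
  ⨆ j, Real.sqrt (∑ i, (A i j) ^ 2)

/-! The strategy is `A = (WᵀW)^{1/4}`. Since `WᵀW = aI + b(J − I)` has eigenvalue `a + (n−1)b` on
the all-ones vector and `a − b` on its orthogonal complement, everything happens in the commutative
algebra spanned by `I` and `J`, where products, inverses and traces are computed eigenvalue-wise.
`A` is symmetric, so its squared column norms are the diagonal entries of `AᵀA = (WᵀW)^{1/2}`, all
equal to `(√(a+(n−1)b) + (n−1)√(a−b))/n`, while `trace(WᵀW (AᵀA)⁻¹) = trace((WᵀW)^{1/2})` is
`n` times that. -/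

namespace Matrix

variable {n : Type*} [Fintype n]

lemma ones_mul_ones : (of fun _ _ => (1 : ℝ) : Matrix n n ℝ) * of (fun _ _ => 1) =
    (Fintype.card n : ℝ) • of fun _ _ => 1 := by
  ext i j
  simp [mul_apply]

variable [DecidableEq n]

/-- The symmetric matrix with eigenvalue `μ` on the all-ones vector and `ν` on its orthogonal
complement. -/
noncomputable def onesSpectral (μ ν : ℝ) : Matrix n n ℝ :=
  ν • 1 + ((μ - ν) / Fintype.card n) • of fun _ _ => 1

lemma onesSpectral_mul (μ ν μ' ν' : ℝ) :
    (onesSpectral μ ν : Matrix n n ℝ) * onesSpectral μ' ν' = onesSpectral (μ * μ') (ν * ν') := by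
  cases isEmpty_or_nonempty n
  · exact Subsingleton.elim _ _
  have hN : (Fintype.card n : ℝ) ≠ 0 := by positivity
  simp only [onesSpectral, add_mul, mul_add, Matrix.one_mul, Matrix.mul_one, ones_mul_ones,
    smul_mul_assoc, mul_smul_comm]
  match_scalars
  · ring
  · field_simp
    ring

lemma onesSpectral_one_one : (onesSpectral 1 1 : Matrix n n ℝ) = 1 := by
  simp [onesSpectral]

lemma inv_onesSpectral {μ ν : ℝ} (hμ : μ ≠ 0) (hν : ν ≠ 0) :
    (onesSpectral μ ν : Matrix n n ℝ)⁻¹ = onesSpectral μ⁻¹ ν⁻¹ :=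
  inv_eq_right_inv <| by rw [onesSpectral_mul, mul_inv_cancel₀ hμ, mul_inv_cancel₀ hν,
    onesSpectral_one_one]

lemma isUnit_det_onesSpectral {μ ν : ℝ} (hμ : μ ≠ 0) (hν : ν ≠ 0) :
    IsUnit (onesSpectral μ ν : Matrix n n ℝ).det :=
  isUnit_det_of_right_inverse <| by rw [onesSpectral_mul, mul_inv_cancel₀ hμ,
    mul_inv_cancel₀ hν, onesSpectral_one_one]

lemma transpose_onesSpectral (μ ν : ℝ) :
    (onesSpectral μ ν : Matrix n n ℝ)ᵀ = onesSpectral μ ν := by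
  simp only [onesSpectral, transpose_add, transpose_smul, transpose_one]
  rfl

lemma onesSpectral_apply_self (μ ν : ℝ) (j : n) :
    (onesSpectral μ ν : Matrix n n ℝ) j j = ν + (μ - ν) / Fintype.card n := by
  simp [onesSpectral]

lemma trace_onesSpectral [Nonempty n] (μ ν : ℝ) :
    trace (onesSpectral μ ν : Matrix n n ℝ) = μ + (Fintype.card n - 1) * ν := by
  have hN : (Fintype.card n : ℝ) ≠ 0 := by positivity
  simp only [trace, diag, onesSpectral_apply_self, Finset.sum_const, Finset.card_univ,
    nsmul_eq_mul]
  field_simp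
  ring

lemma sum_sq_onesSpectral (μ ν : ℝ) (j : n) :
    ∑ i, (onesSpectral μ ν : Matrix n n ℝ) i j ^ 2 = ν ^ 2 + (μ ^ 2 - ν ^ 2) / Fintype.card n :=
  calc ∑ i, (onesSpectral μ ν : Matrix n n ℝ) i j ^ 2
      = ((onesSpectral μ ν)ᵀ * onesSpectral μ ν : Matrix n n ℝ) j j := by simp [mul_apply, sq]
    _ = ν ^ 2 + (μ ^ 2 - ν ^ 2) / Fintype.card n := by
      rw [transpose_onesSpectral, onesSpectral_mul, onesSpectral_apply_self, sq, sq]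

lemma smul_one_add_smul_ones_sub_one [Nonempty n] (a b : ℝ) :
    a • (1 : Matrix n n ℝ) + b • ((of fun _ _ => (1 : ℝ)) - 1) =
      onesSpectral (a + (Fintype.card n - 1) * b) (a - b) := by
  have hN : (Fintype.card n : ℝ) ≠ 0 := by positivity
  rw [onesSpectral, show (a + (Fintype.card n - 1) * b - (a - b)) / Fintype.card n = b by
    field_simp; ring]
  module

end Matrix

lemma l2Sens_eq_of_sum_sq_eq {N : ℕ} [NeZero N] {A : Matrix (Fin N) (Fin N) ℝ} {c : ℝ}
    (h : ∀ j, ∑ i, A i j ^ 2 = c) : l2Sens A = √c := by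
  simp only [l2Sens, h, ciSup_const]

lemma l2Sens_sq_mul_trace_onesSpectral {N : ℕ} [NeZero N] {s t : ℝ} (hs : s ≠ 0) (ht : t ≠ 0) :
    l2Sens (onesSpectral s t : Matrix (Fin N) (Fin N) ℝ) ^ 2 *
        trace (onesSpectral (s ^ 4) (t ^ 4) *
          ((onesSpectral s t)ᵀ * onesSpectral s t : Matrix (Fin N) (Fin N) ℝ)⁻¹) =
      (s ^ 2 + (N - 1) * t ^ 2) ^ 2 / N := by
  have hN : (N : ℝ) ≠ 0 := NeZero.ne _
  have hN1 : (1 : ℝ) ≤ N := Nat.one_le_cast.mpr NeZero.one_le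
  have hcol : t ^ 2 + (s ^ 2 - t ^ 2) / N = (s ^ 2 + (N - 1) * t ^ 2) / N := by
    field_simp; ring
  rw [l2Sens_eq_of_sum_sq_eq (sum_sq_onesSpectral s t), Fintype.card_fin, hcol,
    Real.sq_sqrt (by positivity), transpose_onesSpectral, onesSpectral_mul,
    inv_onesSpectral (mul_ne_zero hs hs) (mul_ne_zero ht ht), onesSpectral_mul, trace_onesSpectral,
    Fintype.card_fin]
  field_simp

lemma sqrt_sqrt_pow_four {x : ℝ} (hx : 0 ≤ x) : √√x ^ 4 = x := by
  rw [show 4 = 2 * 2 from rfl, pow_mul, Real.sq_sqrt (Real.sqrt_nonneg x), Real.sq_sqrt hx]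

theorem svdb_attained_variable_agnostic_general (k : ℕ) (m : ℕ) (a b : ℝ)
    (W : Matrix (Fin m) (Fin (2 ^ k)) ℝ)
    (hW : Wᵀ * W =
      a • (1 : Matrix (Fin (2 ^ k)) (Fin (2 ^ k)) ℝ) +
        b • ((Matrix.of fun _ _ => (1 : ℝ)) - 1))
    (hab : 0 < a - b) (hab' : 0 < a + (((2 ^ k : ℕ) : ℝ) - 1) * b) :
    ∃ A : Matrix (Fin (2 ^ k)) (Fin (2 ^ k)) ℝ, IsUnit A.det ∧
      (∀ j₁ j₂ : Fin (2 ^ k),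
        Real.sqrt (∑ i, (A i j₁) ^ 2) = Real.sqrt (∑ i, (A i j₂) ^ 2)) ∧
      (l2Sens A) ^ 2 * Matrix.trace (Wᵀ * W * (Aᵀ * A)⁻¹)
        = (1 / ((2 ^ k : ℕ) : ℝ)) *
            (Real.sqrt (a + (((2 ^ k : ℕ) : ℝ) - 1) * b) +
              (((2 ^ k : ℕ) : ℝ) - 1) * Real.sqrt (a - b)) ^ 2 := by
  rw [smul_one_add_smul_ones_sub_one, Fintype.card_fin] at hW
  have hs : √√(a + (((2 ^ k : ℕ) : ℝ) - 1) * b) ≠ 0 := by positivity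
  have ht : √√(a - b) ≠ 0 := by positivity
  refine ⟨onesSpectral _ _, isUnit_det_onesSpectral hs ht,
    fun j₁ j₂ => by rw [sum_sq_onesSpectral, sum_sq_onesSpectral], ?_⟩
  rw [← sqrt_sqrt_pow_four hab'.le, ← sqrt_sqrt_pow_four hab.le] at hW
  rw [hW, l2Sens_sq_mul_trace_onesSpectral hs ht, Real.sq_sqrt (Real.sqrt_nonneg _),
    Real.sq_sqrt (Real.sqrt_nonneg _)]
  ring

/-- **The SVD bound is attained for variable agnostic workloads.**
Let `n = 2ᵏ` and let `W` be an `m×n` workload with `WᵀW = a·I + b·(J−I)`, where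
`a − b > 0` and `a + (n−1)b > 0`.  Then there is an invertible column-uniform `n×n`
strategy `A` whose total error `‖A‖₂² · trace(WᵀW (AᵀA)⁻¹)` equals the singular value
bound `(1/n)(√(a+(n−1)b) + (n−1)√(a−b))²`. -/
theorem svdb_attained_variable_agnostic (k : ℕ) (hk : 0 < k) (m : ℕ) (a b : ℝ)
    (W : Matrix (Fin m) (Fin (2 ^ k)) ℝ)
    (hW : Wᵀ * W =
      a • (1 : Matrix (Fin (2 ^ k)) (Fin (2 ^ k)) ℝ) +
        b • ((Matrix.of fun _ _ => (1 : ℝ)) - 1))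
    (hab : 0 < a - b) (hab' : 0 < a + (((2 ^ k : ℕ) : ℝ) - 1) * b) :
    ∃ A : Matrix (Fin (2 ^ k)) (Fin (2 ^ k)) ℝ, IsUnit A.det ∧
      (∀ j₁ j₂ : Fin (2 ^ k),
        Real.sqrt (∑ i, (A i j₁) ^ 2) = Real.sqrt (∑ i, (A i j₂) ^ 2)) ∧
      (l2Sens A) ^ 2 * Matrix.trace (Wᵀ * W * (Aᵀ * A)⁻¹)
        = (1 / ((2 ^ k : ℕ) : ℝ)) *
            (Real.sqrt (a + (((2 ^ k : ℕ) : ℝ) - 1) * b) +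
              (((2 ^ k : ℕ) : ℝ) - 1) * Real.sqrt (a - b)) ^ 2 :=
  svdb_attained_variable_agnostic_general k m a b W hW hab hab'
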